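/- arXiv:1907.07022 — 4 statements merged into one kernel-verified Lean document; each statement's English description precedes it below -/
import Mathlib

section
/- Suppose a group G acts by isometries on a tree, and H, K are elliptic subgroups of G that commute elementwise. Then the subgroup generated by H and K is elliptic (has a global fixed point). -/
/-!
Let `v` be a vertex of the fixed tree of `H` nearest to a fixed point `b` of `K`. Since `H` and
`K` commute, every `k ∈ K` maps the fixed tree of `H` to itself, so `k • v` is another vertex of
that subtree, no farther from `b` than `v`. Prolonging a geodesic from `b` to `v` by the path
from `v` to `k • v`, which stays in the subtree, gives a path in the tree, hence a geodesic; its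
length forces `k • v = v`. So `v` is fixed by `H` and by `K`, hence by `H ⊔ K`.
-/

namespace SimpleGraph

variable {V : Type*} {G : SimpleGraph V} {u v w : V}

lemma Reachable.dist_map_le {W : Type*} {G' : SimpleGraph W} (f : G →g G')
    (h : G.Reachable u v) : G'.dist (f u) (f v) ≤ G.dist u v := by
  obtain ⟨p, hp⟩ := h.exists_walk_length_eq_dist
  simpa [hp] using dist_le (p.map f)

lemma Walk.eq_of_length_eq_dist_of_mem_support {p : G.Walk u v} (hp : p.length = G.dist u v)
    (hw : w ∈ p.support) (hdist : G.dist u v ≤ G.dist u w) : w = v := by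
  classical
  have hsplit := congrArg Walk.length (p.take_spec hw)
  rw [Walk.length_append] at hsplit
  have htake : G.dist u w ≤ (p.takeUntil w hw).length := dist_le _
  exact Walk.eq_of_length_eq_zero (p := p.dropUntil w hw) (by omega)

lemma IsAcyclic.length_eq_dist_of_isPath (hG : G.IsAcyclic) {p : G.Walk u v} (hp : p.IsPath) :
    p.length = G.dist u v := by
  obtain ⟨q, hq, hlen⟩ := p.reachable.exists_path_of_dist
  obtain rfl : p = q := congrArg Subtype.val ((hG.subsingleton_path u v).elim ⟨p, hp⟩ ⟨q, hq⟩)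
  exact hlen

/-- In a forest the subgraph fixed by an injective endomorphism is convex. -/
lemma IsAcyclic.apply_eq_of_mem_support (hG : G.IsAcyclic) {f : G →g G}
    (hf : Function.Injective f) {p : G.Walk u v} (hp : p.IsPath) (hu : f u = u) (hv : f v = v)
    (hw : w ∈ p.support) : f w = w := by
  have hpath : (p.map f).copy hu hv = p := congrArg Subtype.val <|
    (hG.subsingleton_path u v).elim ⟨_, (Walk.isPath_copy _ hu hv).mpr (hp.map hf)⟩ ⟨p, hp⟩
  have hsupport : p.support.map f = p.support.map id := by
    rw [List.map_id, ← Walk.support_map, ← Walk.support_copy _ hu hv, hpath]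
  exact List.map_eq_map_iff.mp hsupport w hw

lemma IsAcyclic.eq_of_isPath_of_dist_le (hG : G.IsAcyclic) {b y : V} (hb : G.Reachable b v)
    {q : G.Walk v y} (hq : q.IsPath) (hmin : ∀ x ∈ q.support, G.dist b v ≤ G.dist b x)
    (hy : G.dist b y ≤ G.dist b v) : y = v := by
  obtain ⟨p, hp, hlen⟩ := hb.exists_path_of_dist
  have hv : v ∉ q.support.tail := by
    have := hq.support_nodup
    rw [← Walk.cons_tail_support, List.nodup_cons] at this
    exact this.1
  have hpq : (p.append q).IsPath := by
    rw [Walk.isPath_def, Walk.support_append, List.nodup_append]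
    refine ⟨hp.support_nodup, hq.support_nodup.sublist (List.tail_sublist _), ?_⟩
    rintro x hxp x' hxq rfl
    have hxq' := List.mem_of_mem_tail hxq
    exact hv (p.eq_of_length_eq_dist_of_mem_support hlen hxp (hmin x hxq') ▸ hxq)
  have := hG.length_eq_dist_of_isPath hpq
  rw [Walk.length_append] at this
  exact (Walk.eq_of_length_eq_zero (p := q) (by omega)).symm

end SimpleGraph

open SimpleGraph

/-- Two commuting elliptic subgroups of a group acting on a tree generate an elliptic
subgroup. -/
theorem stmt_2 {V : Type*} (T : SimpleGraph V) (hT : T.IsTree)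
    {G : Type*} [Group G] [MulAction G V]
    (hadj : ∀ (g : G) (u v : V), T.Adj u v → T.Adj (g • u) (g • v))
    (H K : Subgroup G)
    (hcomm : ∀ h ∈ H, ∀ k ∈ K, h * k = k * h)
    (hH : ∃ v : V, ∀ h ∈ H, h • v = v)
    (hK : ∃ v : V, ∀ k ∈ K, k • v = v) :
    ∃ v : V, ∀ g ∈ H ⊔ K, g • v = v := by
  obtain ⟨a, ha⟩ := hH
  obtain ⟨b, hb⟩ := hK
  let act (g : G) : T →g T := ⟨(g • ·), hadj g _ _⟩
  let S : Set V := {x | ∀ h ∈ H, h • x = x}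
  have haS : a ∈ S := ha
  obtain ⟨v, hvS, hvmin⟩ : ∃ v ∈ S, ∀ x ∈ S, T.dist b v ≤ T.dist b x :=
    ⟨_, Function.argminOn_mem _ _ ⟨a, haS⟩, fun x hx => Function.argminOn_le _ _ hx⟩
  have hKv : ∀ k ∈ K, k • v = v := by
    intro k hk
    have hkvS : k • v ∈ S := fun h hh => by
      rw [smul_smul, hcomm h hh k hk, mul_smul, hvS h hh]
    obtain ⟨q, hq, -⟩ := (hT.connected v (k • v)).exists_path_of_dist
    have hqS : ∀ x ∈ q.support, x ∈ S := fun x hx h hh =>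
      hT.isAcyclic.apply_eq_of_mem_support (f := act h) (MulAction.injective h) hq (hvS h hh)
        (hkvS h hh) hx
    refine hT.isAcyclic.eq_of_isPath_of_dist_le (hT.connected b v) hq
      (fun x hx => hvmin x (hqS x hx)) ?_
    calc T.dist b (k • v) = T.dist (k • b) (k • v) := by rw [hb k hk]
      _ ≤ T.dist b v := (hT.connected b v).dist_map_le (act k)
  have hstab : H ⊔ K ≤ MulAction.stabilizer G v := sup_le hvS hKv
  exact ⟨v, fun g hg => hstab hg⟩
end

section
/- If G and H are groups with Property (FA), then the direct product G × H has Property (FA). -/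
/-!
Let `S` be the set of vertices fixed by the factor `G`. It is nonempty since `G` has (FA), and
it spans a subtree: a tree automorphism fixing two vertices fixes the unique path between them.
The factor `H` commutes with `G`, so it preserves `S` and acts on this subtree without inversions;
since `H` has (FA) it fixes some vertex of `S`, which is then fixed by all of `G × H`.
-/

/-- Property (FA): every action by graph automorphisms, without inversions, on a
simplicial tree has a global fixed point. -/
def HasFA (G : Type*) [Group G] : Prop :=
  ∀ (V : Type) (T : SimpleGraph V), T.IsTree →
    ∀ ρ : G →* Equiv.Perm V,
      (∀ (g : G) (u v : V), T.Adj u v → T.Adj (ρ g u) (ρ g v)) →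
      (∀ (g : G) (u v : V), T.Adj u v → ¬(ρ g u = v ∧ ρ g v = u)) →
      ∃ x : V, ∀ g : G, ρ g x = x

namespace SimpleGraph

variable {V : Type*} {T : SimpleGraph V}

theorem IsAcyclic.apply_eq_self_of_mem_support (hT : T.IsAcyclic) {f : T →g T}
    (hf : Function.Injective f) {u v : V} (hu : f u = u) (hv : f v = v)
    {p : T.Walk u v} (hp : p.IsPath) {w : V} (hw : w ∈ p.support) : f w = w := by
  have hpath : ((p.map f).copy hu hv).IsPath := by
    rw [Walk.isPath_copy]
    exact hp.map hf
  have hmap : (p.map f).copy hu hv = p :=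
    congrArg Subtype.val <| (hT.subsingleton_path u v).elim ⟨_, hpath⟩ ⟨p, hp⟩
  have hsupp : p.support.map f = p.support := by
    simpa using congrArg Walk.support hmap
  exact List.map_inj_left.mp (hsupp.trans (List.map_id _).symm) w hw

theorem IsAcyclic.isTree_induce (hT : T.IsAcyclic) {S : Set V} (hne : S.Nonempty)
    (hS : ∀ u ∈ S, ∀ v ∈ S, ∃ p : T.Walk u v, ∀ w ∈ p.support, w ∈ S) :
    (T.induce S).IsTree := by
  have := hne.to_subtype
  refine ⟨⟨fun ⟨u, hu⟩ ⟨v, hv⟩ => ?_⟩, hT.induce S⟩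
  obtain ⟨p, hp⟩ := hS u hu v hv
  exact (p.induce S hp).reachable

theorem IsTree.isTree_induce_fixedPoints {ι : Type*} (hT : T.IsTree) (f : ι → T →g T)
    (hf : ∀ i, Function.Injective (f i)) (hne : ∃ x, ∀ i, f i x = x) :
    (T.induce {x | ∀ i, f i x = x}).IsTree :=
  hT.isAcyclic.isTree_induce hne fun u hu v hv => by
    obtain ⟨p, hp, -⟩ := hT.existsUnique_path u v
    exact ⟨p, fun w hw i =>
      hT.isAcyclic.apply_eq_self_of_mem_support (hf i) (hu i) (hv i) hp hw⟩

end SimpleGraph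

theorem Equiv.Perm.apply_apply_eq_self_iff_of_commute {V : Type*} {a b : Equiv.Perm V}
    (h : Commute a b) (v : V) : b (a v) = a v ↔ b v = v := by
  rw [← Equiv.Perm.mul_apply, ← h.eq, Equiv.Perm.mul_apply, EquivLike.apply_eq_iff_eq]

def MonoidHom.restrictPerm {H V : Type*} [Group H] (ρ : H →* Equiv.Perm V) (S : Set V)
    (hS : ∀ h v, ρ h v ∈ S ↔ v ∈ S) : H →* Equiv.Perm S where
  toFun h := (ρ h).subtypePerm (hS h)
  map_one' := by ext; simp
  map_mul' _ _ := by ext; simp only [map_mul]; rfl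

/-- A direct product of two groups with Property (FA) has Property (FA). -/
theorem stmt_3 {G H : Type*} [Group G] [Group H]
    (hG : HasFA G) (hH : HasFA H) : HasFA (G × H) := by
  intro V T hT ρ hadj hinv
  let S : Set V := {v | ∀ g : G, ρ (g, 1) v = v}
  have hS_tree : (T.induce S).IsTree := by
    obtain ⟨x, hx⟩ := hG V T hT (ρ.comp (.inl G H)) (fun _ => hadj _) (fun _ => hinv _)
    exact hT.isTree_induce_fixedPoints (fun g => ⟨ρ (g, 1), hadj _ _ _⟩)
      (fun _ => (ρ _).injective) ⟨x, hx⟩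
  have hS_inv : ∀ h v, ρ (1, h) v ∈ S ↔ v ∈ S := fun h v =>
    forall_congr' fun g => Equiv.Perm.apply_apply_eq_self_iff_of_commute
      ((MonoidHom.commute_inl_inr g h).symm.map ρ) v
  obtain ⟨z, hz⟩ := hH S (T.induce S) hS_tree ((ρ.comp (.inr G H)).restrictPerm S hS_inv)
    (fun h _ _ huv => hadj (1, h) _ _ huv)
    (fun h u v huv hswap =>
      hinv (1, h) u v huv (hswap.imp (congrArg Subtype.val) (congrArg Subtype.val)))
  refine ⟨z, fun gh => ?_⟩
  have hzH : ρ (1, gh.2) z = z := congrArg Subtype.val (hz gh.2)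
  rw [← Prod.fst_mul_snd gh, map_mul, Equiv.Perm.mul_apply, hzH, z.2 gh.1]
end

section
/- Suppose a group G acts on a tree, H_1 and H_2 are elliptic subgroups of G, and g ∈ G is such that H_1 has a common fixed point with each of H_1^g and H_2^g, and H_2 has a common fixed point with each of H_1^g and H_2^g. Then H_1 and H_2 have a common fixed point. -/
/-!
Let `A, B` be the fixed-point sets of `H₁, H₂`. Fixed-point sets are subtrees, and
`C = g⁻¹ • A`, `D = g⁻¹ • B` are those of `H₁^g, H₂^g`. As `g • (C ∩ D) = A ∩ B`, it suffices
to see that four subtrees `A, B, C, D` of a tree with `A ∩ C`, `C ∩ B`, `B ∩ D`, `D ∩ A` all nonempty satisfy `A ∩ B ≠ ∅` or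
`C ∩ D ≠ ∅`. If both are empty, the geodesic from `A ∩ C` to `B ∩ C` lies in `C` and in
`A ∪ D ∪ B`, hence in `A ∪ B`, so it crosses an edge `xy` from `A` to `B`. Every geodesic from
`A` to `B` passes through that edge, in particular the one from `A ∩ D` to `B ∩ D`, which lies
in `D`; thus `x ∈ C ∩ D`.
-/

open Function

namespace SimpleGraph

variable {V : Type*} {T : SimpleGraph V}

def IsPathConvex (T : SimpleGraph V) (s : Set V) : Prop :=
  ∀ ⦃u v : V⦄, u ∈ s → v ∈ s → ∀ p : T.Walk u v, p.IsPath → ∀ x ∈ p.support, x ∈ s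

theorem IsAcyclic.support_subset_of_isPath (hT : T.IsAcyclic) {u v : V} {p : T.Walk u v}
    (hp : p.IsPath) (w : T.Walk u v) : p.support ⊆ w.support := by
  classical
  have hpw : p = w.bypass := congrArg Subtype.val <|
    (hT.subsingleton_path u v).elim ⟨p, hp⟩ ⟨w.bypass, w.bypass_isPath⟩
  exact hpw ▸ w.support_bypass_subset_support

theorem IsAcyclic.isPathConvex_fixedPoints (hT : T.IsAcyclic) (f : T →g T) (hf : Injective f) :
    T.IsPathConvex (fixedPoints f) := by
  intro u v hu hv p hp
  have hmap : (p.map f).copy hu hv = p := congrArg Subtype.val <|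
    (hT.subsingleton_path u v).elim ⟨_, (Walk.isPath_copy _ hu hv).mpr (hp.map hf)⟩ ⟨p, hp⟩
  have hsupp : p.support.map f = p.support := by
    rw [← Walk.support_map, ← Walk.support_copy _ hu hv, hmap]
  exact List.map_eq_map_iff.mp (hsupp.trans p.support.map_id.symm)

theorem IsAcyclic.isPathConvex_setOf_forall_smul_eq {G ι : Type*} [Group G] [MulAction G V]
    (hT : T.IsAcyclic) (hadj : ∀ (g : G) (u v : V), T.Adj u v → T.Adj (g • u) (g • v))
    (f : ι → G) (s : Set ι) : T.IsPathConvex {v | ∀ i ∈ s, f i • v = v} :=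
  fun _ _ hu hv p hp x hx i hi =>
    hT.isPathConvex_fixedPoints ⟨(f i • ·), hadj (f i) _ _⟩ (MulAction.injective (f i))
      (hu i hi) (hv i hi) p hp x hx

theorem IsTree.isPathConvex_union (hT : T.IsTree) {s t : Set V} (hs : T.IsPathConvex s)
    (ht : T.IsPathConvex t) (hst : (s ∩ t).Nonempty) : T.IsPathConvex (s ∪ t) := by
  obtain ⟨c, hcs, hct⟩ := hst
  have hcross : ∀ ⦃u v : V⦄, u ∈ s → v ∈ t → ∀ p : T.Walk u v, p.IsPath →
      ∀ x ∈ p.support, x ∈ s ∪ t := by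
    intro u v hu hv p hp x hx
    obtain ⟨q₁, hq₁, -⟩ := hT.existsUnique_path u c
    obtain ⟨q₂, hq₂, -⟩ := hT.existsUnique_path c v
    rcases (Walk.mem_support_append_iff _ _).mp
        (hT.isAcyclic.support_subset_of_isPath hp (q₁.append q₂) hx) with hx₁ | hx₂
    · exact Or.inl (hs hu hcs q₁ hq₁ x hx₁)
    · exact Or.inr (ht hct hv q₂ hq₂ x hx₂)
  rintro u v (hu | hu) (hv | hv) p hp x hx
  · exact Or.inl (hs hu hv p hp x hx)
  · exact hcross hu hv p hp x hx
  · exact hcross hv hu p.reverse hp.reverse x (by simpa using hx)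
  · exact Or.inr (ht hu hv p hp x hx)

theorem IsTree.mem_support_of_adj_of_disjoint (hT : T.IsTree) {s t : Set V}
    (hs : T.IsPathConvex s) (ht : T.IsPathConvex t) (hst : Disjoint s t) {x y : V}
    (hxy : T.Adj x y) (hx : x ∈ s) (hy : y ∈ t) {a b : V} (ha : a ∈ s) (hb : b ∈ t)
    (p : T.Walk a b) (hp : p.IsPath) : x ∈ p.support := by
  obtain ⟨q₁, hq₁, -⟩ := hT.existsUnique_path a x
  obtain ⟨q₂, hq₂, -⟩ := hT.existsUnique_path y b
  have hq : (q₁.append (.cons hxy q₂)).IsPath := by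
    rw [Walk.isPath_def, Walk.support_append, Walk.support_cons, List.tail_cons,
      List.nodup_append]
    exact ⟨hq₁.support_nodup, hq₂.support_nodup, fun u hu v hv =>
      hst.ne_of_mem (hs ha hx q₁ hq₁ u hu) (ht hy hb q₂ hq₂ v hv)⟩
  obtain ⟨r, -, hr⟩ := hT.existsUnique_path a b
  have hpq : p = q₁.append (.cons hxy q₂) := (hr p hp).trans (hr _ hq).symm
  simp [hpq]

theorem IsTree.inter_nonempty_or_inter_nonempty (hT : T.IsTree) {A B C D : Set V}
    (hA : T.IsPathConvex A) (hB : T.IsPathConvex B) (hC : T.IsPathConvex C)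
    (hD : T.IsPathConvex D) (hAC : (A ∩ C).Nonempty) (hBC : (B ∩ C).Nonempty)
    (hAD : (A ∩ D).Nonempty) (hBD : (B ∩ D).Nonempty) :
    (A ∩ B).Nonempty ∨ (C ∩ D).Nonempty := by
  refine or_iff_not_imp_left.mpr fun hAB => ?_
  rw [Set.not_nonempty_iff_eq_empty, ← Set.disjoint_iff_inter_eq_empty] at hAB
  obtain ⟨a₁, ha₁A, ha₁C⟩ := hAC
  obtain ⟨b₁, hb₁B, hb₁C⟩ := hBC
  obtain ⟨a₂, ha₂A, ha₂D⟩ := hAD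
  obtain ⟨b₂, hb₂B, hb₂D⟩ := hBD
  obtain ⟨p, hp, -⟩ := hT.existsUnique_path a₁ b₁
  obtain ⟨q, hq, -⟩ := hT.existsUnique_path a₂ b₂
  have hpC : ∀ x ∈ p.support, x ∈ C := hC ha₁C hb₁C p hp
  by_cases hpD : ∃ x ∈ p.support, x ∈ D
  · obtain ⟨x, hxp, hxD⟩ := hpD
    exact ⟨x, hpC x hxp, hxD⟩
  push Not at hpD
  have hADB : T.IsPathConvex (A ∪ D ∪ B) :=
    hT.isPathConvex_union (hT.isPathConvex_union hA hD ⟨a₂, ha₂A, ha₂D⟩) hB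
      ⟨b₂, Or.inr hb₂D, hb₂B⟩
  obtain ⟨d, hd, hdA, hdA'⟩ := p.exists_boundary_dart A ha₁A (hAB.notMem_of_mem_right hb₁B)
  have hdB : d.snd ∈ B := by
    rcases hADB (Or.inl (Or.inl ha₁A)) (Or.inr hb₁B) p hp _
      (p.dart_snd_mem_support_of_mem_darts hd) with (h | h) | h
    · exact absurd h hdA'
    · exact absurd h (hpD _ (p.dart_snd_mem_support_of_mem_darts hd))
    · exact h
  exact ⟨d.fst, hpC _ (p.dart_fst_mem_support_of_mem_darts hd),
    hD ha₂D hb₂D q hq _ (hT.mem_support_of_adj_of_disjoint hA hB hAB d.adj hdA hdB ha₂A hb₂B q hq)⟩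

end SimpleGraph

theorem MulAction.conj_smul_eq_self_iff {G α : Type*} [Group G] [MulAction G α] (g h : G)
    (a : α) : (g⁻¹ * h * g) • a = a ↔ h • g • a = g • a := by
  rw [mul_smul, mul_smul, inv_smul_eq_iff]

theorem stmt_6_general {V : Type*} (T : SimpleGraph V) (hT : T.IsTree)
    {G : Type*} [Group G] [MulAction G V]
    (hadj : ∀ (g : G) (u v : V), T.Adj u v → T.Adj (g • u) (g • v))
    (H₁ H₂ : Subgroup G) (g : G)
    (h11 : ∃ v : V, (∀ h ∈ H₁, h • v = v) ∧ (∀ h ∈ H₁, (g⁻¹ * h * g) • v = v))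
    (h12 : ∃ v : V, (∀ h ∈ H₁, h • v = v) ∧ (∀ h ∈ H₂, (g⁻¹ * h * g) • v = v))
    (h21 : ∃ v : V, (∀ h ∈ H₂, h • v = v) ∧ (∀ h ∈ H₁, (g⁻¹ * h * g) • v = v))
    (h22 : ∃ v : V, (∀ h ∈ H₂, h • v = v) ∧ (∀ h ∈ H₂, (g⁻¹ * h * g) • v = v)) :
    ∃ v : V, (∀ h ∈ H₁, h • v = v) ∧ (∀ h ∈ H₂, h • v = v) := by
  have hconv (f : G → G) (H : Subgroup G) :
      T.IsPathConvex {v | ∀ h ∈ (H : Set G), f h • v = v} :=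
    hT.isAcyclic.isPathConvex_setOf_forall_smul_eq hadj f (H : Set G)
  obtain hfix | ⟨v, hv₁, hv₂⟩ := hT.inter_nonempty_or_inter_nonempty (hconv id H₁)
    (hconv id H₂) (hconv (g⁻¹ * · * g) H₁) (hconv (g⁻¹ * · * g) H₂) h11 h21 h12 h22
  · exact hfix
  · exact ⟨g • v, fun h hh => (MulAction.conj_smul_eq_self_iff g h v).mp (hv₁ h hh),
      fun h hh => (MulAction.conj_smul_eq_self_iff g h v).mp (hv₂ h hh)⟩

/-- Suppose `G` acts on a tree, `H₁, H₂` are elliptic subgroups, and `g ∈ G` is such that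
each of `H₁, H₂` has a common fixed point with each of the conjugates `H₁^g = g⁻¹H₁g` and
`H₂^g = g⁻¹H₂g`. Then `H₁` and `H₂` have a common fixed point. -/
theorem stmt_6 {V : Type*} (T : SimpleGraph V) (hT : T.IsTree)
    {G : Type*} [Group G] [MulAction G V]
    (hadj : ∀ (g : G) (u v : V), T.Adj u v → T.Adj (g • u) (g • v))
    (H₁ H₂ : Subgroup G) (g : G)
    (hell₁ : ∃ v : V, ∀ h ∈ H₁, h • v = v)
    (hell₂ : ∃ v : V, ∀ h ∈ H₂, h • v = v)
    (h11 : ∃ v : V, (∀ h ∈ H₁, h • v = v) ∧ (∀ h ∈ H₁, (g⁻¹ * h * g) • v = v))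
    (h12 : ∃ v : V, (∀ h ∈ H₁, h • v = v) ∧ (∀ h ∈ H₂, (g⁻¹ * h * g) • v = v))
    (h21 : ∃ v : V, (∀ h ∈ H₂, h • v = v) ∧ (∀ h ∈ H₁, (g⁻¹ * h * g) • v = v))
    (h22 : ∃ v : V, (∀ h ∈ H₂, h • v = v) ∧ (∀ h ∈ H₂, (g⁻¹ * h * g) • v = v)) :
    ∃ v : V, (∀ h ∈ H₁, h • v = v) ∧ (∀ h ∈ H₂, h • v = v) :=
  stmt_6_general T hT hadj H₁ H₂ g h11 h12 h21 h22
end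

section
/- Let h_1, h_2 be elliptic isometries of a tree whose fixed point sets are non-empty and disjoint. Then the product h_1 h_2 is a hyperbolic isometry with translation length 2·d(Fix(h_1), Fix(h_2)), and its axis contains the bridge between Fix(h_1) and Fix(h_2). -/
/-!
For an elliptic isometry `h` of a tree and any point `x`, the median of a fixed point `b`, `x`
and `h x` is again fixed, so the midpoint of `[x, h x]` lies in `Fix h`. With `y = h₂ x`, the
midpoints of `[y, x]` and `[y, h₁ y]` lie in `Fix h₂` and `Fix h₁`; midpoints of two geodesics
issuing from `y` are at most half as far apart as their endpoints, hence
`d(x, h₁h₂ x) ≥ 2 d(Fix h₁, Fix h₂)` for every `x`. Conversely, for `w` on a geodesic `[a, b]`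
with `a ∈ Fix h₁`, `b ∈ Fix h₂`, the triangle inequality through `a` and `b`, together with
`d(a, h₁h₂ w) = d(a, h₂ w)` and `d(b, h₂ w) = d(b, w)`, gives
`d(w, h₁h₂ w) ≤ d(w, a) + d(a, b) + d(b, w) = 2 d(a, b)`.
-/

/-- `w` lies on the geodesic between `u` and `v` (w.r.t. the edge-path metric). -/
def OnGeod {V : Type*} (T : SimpleGraph V) (u w v : V) : Prop :=
  T.dist u w + T.dist w v = T.dist u v

/-- The distance between two sets of vertices. -/
noncomputable def setDist {V : Type*} (T : SimpleGraph V) (A B : Set V) : ℕ :=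
  sInf {n : ℕ | ∃ a ∈ A, ∃ b ∈ B, T.dist a b = n}

/-- The translation length of `g`: the infimum of `d(x, g • x)`. -/
noncomputable def translationLength {V : Type*} (T : SimpleGraph V)
    {G : Type*} [Group G] [MulAction G V] (g : G) : ℕ :=
  sInf (Set.range fun x : V => T.dist x (g • x))

open SimpleGraph

section

variable {V : Type*} {T : SimpleGraph V}

def IsMidpoint (T : SimpleGraph V) (x m y : V) : Prop :=
  OnGeod T x m y ∧ T.dist x m = T.dist m y

theorem SimpleGraph.IsTree.length_eq_dist_of_isPath (hT : T.IsTree) {u v : V}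
    {p : T.Walk u v} (hp : p.IsPath) : p.length = T.dist u v := by
  obtain ⟨q, hq, hql⟩ := hT.connected.exists_path_of_dist u v
  rw [(hT.existsUnique_path u v).unique hp hq, hql]

theorem SimpleGraph.Walk.IsPath.append_of_support_inter {u v w : V} {p : T.Walk u v}
    {q : T.Walk v w} (hp : p.IsPath) (hq : q.IsPath)
    (h : ∀ x ∈ p.support, x ∈ q.support → x = v) : (p.append q).IsPath := by
  have hq' := hq.support_nodup
  rw [← q.cons_tail_support, List.nodup_cons] at hq'
  rw [Walk.isPath_def, Walk.support_append]
  refine hp.support_nodup.append hq'.2 fun x hx hx' => ?_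
  obtain rfl := h x hx (List.mem_of_mem_tail hx')
  exact hq'.1 hx'

theorem onGeod_iff_mem_support (hT : T.IsTree) {u v w : V} {p : T.Walk u v} (hp : p.IsPath) :
    OnGeod T u w v ↔ w ∈ p.support := by
  classical
  constructor
  · intro hw
    obtain ⟨p₁, -, hl₁⟩ := hT.connected.exists_path_of_dist u w
    obtain ⟨p₂, -, hl₂⟩ := hT.connected.exists_path_of_dist w v
    have hq : (p₁.append p₂).IsPath :=
      Walk.isPath_of_length_eq_dist _ (by rw [Walk.length_append, hl₁, hl₂]; exact hw)
    rw [(hT.existsUnique_path u v).unique hp hq, Walk.mem_support_append_iff]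
    exact Or.inr p₂.start_mem_support
  · intro hw
    have h := congrArg Walk.length (p.take_spec hw)
    rwa [Walk.length_append, hT.length_eq_dist_of_isPath (hp.takeUntil hw),
      hT.length_eq_dist_of_isPath (hp.dropUntil hw), hT.length_eq_dist_of_isPath hp] at h

theorem onGeod_left (u v : V) : OnGeod T u u v := by
  simp [OnGeod]

theorem OnGeod.symm {u w v : V} (h : OnGeod T u w v) : OnGeod T v w u := by
  unfold OnGeod at *
  rw [dist_comm (u := v) (v := w), dist_comm (u := w) (v := u), dist_comm (u := v) (v := u)]
  omega

theorem OnGeod.trans (hT : T.Connected) {y p m z : V} (h₁ : OnGeod T y p m)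
    (h₂ : OnGeod T y m z) : OnGeod T y p z := by
  have := hT.dist_triangle (u := p) (v := m) (w := z)
  have := hT.dist_triangle (u := y) (v := p) (w := z)
  unfold OnGeod at *
  omega

theorem onGeod_total (hT : T.IsTree) {y x p q : V} (hp : OnGeod T y p x)
    (hq : OnGeod T y q x) : OnGeod T y p q ∨ OnGeod T y q p := by
  classical
  obtain ⟨P, hP, -⟩ := hT.connected.exists_path_of_dist y x
  have hqP := (onGeod_iff_mem_support hT hP).1 hq
  have hpP := (onGeod_iff_mem_support hT hP).1 hp
  rw [← P.take_spec hqP, Walk.mem_support_append_iff] at hpP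
  rcases hpP with hpP | hpP
  · exact Or.inl ((onGeod_iff_mem_support hT (hP.takeUntil hqP)).2 hpP)
  · have hqpx : OnGeod T q p x := (onGeod_iff_mem_support hT (hP.dropUntil hqP)).2 hpP
    have := hT.connected.dist_triangle (u := y) (v := q) (w := p)
    have := hT.connected.dist_triangle (u := y) (v := p) (w := x)
    unfold OnGeod at *
    omega

theorem eq_of_onGeod_of_dist_eq (hT : T.IsTree) {y x p q : V} (hp : OnGeod T y p x)
    (hq : OnGeod T y q x) (h : T.dist y p = T.dist y q) : p = q := by
  rcases onGeod_total hT hp hq with hpq | hqp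
  · exact hT.connected.dist_eq_zero_iff.mp (by unfold OnGeod at hpq; omega)
  · exact (hT.connected.dist_eq_zero_iff.mp (by unfold OnGeod at hqp; omega)).symm

theorem exists_median (hT : T.IsTree) (y x z : V) :
    ∃ m, OnGeod T y m x ∧ OnGeod T y m z ∧ OnGeod T x m z := by
  classical
  obtain ⟨P, hP, -⟩ := hT.connected.exists_path_of_dist y x
  obtain ⟨Q, hQ, -⟩ := hT.connected.exists_path_of_dist y z
  -- the common vertex of `P` and `Q` farthest from `y`
  obtain ⟨m, hmPQ, hmax⟩ := (P.support.toFinset ∩ Q.support.toFinset).exists_max_image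
    (T.dist y) ⟨y, by simp⟩
  simp only [Finset.mem_inter, List.mem_toFinset] at hmPQ hmax
  obtain ⟨hmP, hmQ⟩ := hmPQ
  have hmx := (onGeod_iff_mem_support hT hP).2 hmP
  have hmz := (onGeod_iff_mem_support hT hQ).2 hmQ
  have hmeet : ∀ c ∈ (P.dropUntil m hmP).support, c ∈ (Q.dropUntil m hmQ).support → c = m := by
    intro c hcP hcQ
    have hcx : OnGeod T m c x := (onGeod_iff_mem_support hT (hP.dropUntil hmP)).2 hcP
    have hc : T.dist y c ≤ T.dist y m :=
      hmax c ⟨P.support_dropUntil_subset_support hmP hcP, Q.support_dropUntil_subset_support hmQ hcQ⟩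
    have := hT.connected.dist_triangle (u := y) (v := c) (w := x)
    have hmc : T.dist m c = 0 := by unfold OnGeod at hmx hcx; omega
    exact (hT.connected.dist_eq_zero_iff.mp hmc).symm
  have hR := (hP.dropUntil hmP).reverse.append_of_support_inter (hQ.dropUntil hmQ)
    (by simpa only [Walk.support_reverse, List.mem_reverse] using hmeet)
  have hxmz := hT.length_eq_dist_of_isPath hR
  rw [Walk.length_append, Walk.length_reverse, hT.length_eq_dist_of_isPath (hP.dropUntil hmP),
    hT.length_eq_dist_of_isPath (hQ.dropUntil hmQ), dist_comm (u := m) (v := x)] at hxmz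
  exact ⟨m, hmx, hmz, hxmz⟩

theorem IsMidpoint.symm {x m y : V} (h : IsMidpoint T x m y) : IsMidpoint T y m x :=
  ⟨h.1.symm, by rw [dist_comm (u := y), dist_comm (u := m) (v := x)]; exact h.2.symm⟩

theorem two_mul_dist_le_of_isMidpoint (hT : T.IsTree) {x p q m₁ m₂ : V}
    (h₁ : IsMidpoint T x m₁ p) (h₂ : IsMidpoint T x m₂ q) : 2 * T.dist m₁ m₂ ≤ T.dist p q := by
  obtain ⟨hm₁, e₁⟩ := h₁
  obtain ⟨hm₂, e₂⟩ := h₂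
  obtain ⟨m, hmp, hmq, hpq⟩ := exists_median hT x p q
  have := dist_comm (G := T) (u := m₁) (v := m₂)
  have := dist_comm (G := T) (u := m₁) (v := m)
  have := dist_comm (G := T) (u := p) (v := m)
  have := hT.connected.dist_triangle (u := m₁) (v := m) (w := m₂)
  -- Either both midpoints lie beyond the branch point `m`, or `m₁` and `m₂` lie on a common
  -- geodesic from `x` (and `d(x, m) ≤ 2 d(x, mᵢ)` since `m` lies on both `[x, p]` and `[x, q]`).
  rcases onGeod_total hT hmp hm₁ with hmm₁ | hm₁m
  · rcases onGeod_total hT hmq hm₂ with hmm₂ | hm₂m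
    · unfold OnGeod at *; omega
    · rcases onGeod_total hT hm₁ (hm₂m.trans hT.connected hmp) with h | h <;>
        · unfold OnGeod at *; omega
  · rcases onGeod_total hT (hm₁m.trans hT.connected hmq) hm₂ with h | h <;>
      · unfold OnGeod at *; omega

theorem SimpleGraph.Reachable.dist_map_le_s13 {W : Type*} {G : SimpleGraph W} (f : T →g G)
    {u v : V} (h : T.Reachable u v) : G.dist (f u) (f v) ≤ T.dist u v := by
  obtain ⟨p, -, hp⟩ := h.exists_path_of_dist
  calc G.dist (f u) (f v) ≤ (p.map f).length := dist_le _
    _ = T.dist u v := by rw [Walk.length_map, hp]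

theorem dist_smul_eq_of_adj {G : Type*} [Group G] [MulAction G V] (hT : T.Connected)
    (hadj : ∀ (g : G) (u v : V), T.Adj u v → T.Adj (g • u) (g • v)) (g : G) (u v : V) :
    T.dist (g • u) (g • v) = T.dist u v := by
  have hle (g : G) (u v : V) : T.dist (g • u) (g • v) ≤ T.dist u v :=
    (hT u v).dist_map_le_s13 ⟨(g • ·), fun h => hadj g _ _ h⟩
  refine (hle g u v).antisymm ?_
  simpa using hle g⁻¹ (g • u) (g • v)

theorem exists_fixed_isMidpoint (hT : T.IsTree) {f : V → V}
    (hf : ∀ u v, T.dist (f u) (f v) = T.dist u v) {b : V} (hb : f b = b) (x : V) :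
    ∃ m, f m = m ∧ IsMidpoint T x m (f x) := by
  obtain ⟨m, hmx, hmfx, hxmfx⟩ := exists_median hT b x (f x)
  have hfm : OnGeod T b (f m) (f x) := by
    rw [← hb]
    unfold OnGeod at *
    rwa [hf, hf, hf]
  have hdm : T.dist b (f m) = T.dist b m := by rw [← hf b m, hb]
  have hdx : T.dist b (f x) = T.dist b x := by rw [← hf b x, hb]
  refine ⟨m, eq_of_onGeod_of_dist_eq hT hfm hmfx hdm, hxmfx, ?_⟩
  have := dist_comm (G := T) (u := x) (v := m)
  unfold OnGeod at hmx hmfx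
  omega

theorem setDist_le {A B : Set V} {a b : V} (ha : a ∈ A) (hb : b ∈ B) :
    setDist T A B ≤ T.dist a b :=
  Nat.sInf_le ⟨a, ha, b, hb, rfl⟩

theorem exists_dist_eq_setDist {A B : Set V} (hA : A.Nonempty) (hB : B.Nonempty) :
    ∃ a ∈ A, ∃ b ∈ B, T.dist a b = setDist T A B :=
  let ⟨a, ha⟩ := hA
  let ⟨b, hb⟩ := hB
  Nat.sInf_mem (s := {n | ∃ a ∈ A, ∃ b ∈ B, T.dist a b = n}) ⟨_, a, ha, b, hb, rfl⟩

theorem setDist_pos (hT : T.Connected) {A B : Set V} (hA : A.Nonempty) (hB : B.Nonempty)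
    (hAB : Disjoint A B) : 0 < setDist T A B := by
  obtain ⟨a, ha, b, hb, hab⟩ := exists_dist_eq_setDist (T := T) hA hB
  exact hab ▸ hT.pos_dist_of_ne (hAB.ne_of_mem ha hb)

theorem two_mul_setDist_le_dist_comp (hT : T.IsTree) {f₁ f₂ : V → V}
    (hf₁ : ∀ u v, T.dist (f₁ u) (f₁ v) = T.dist u v)
    (hf₂ : ∀ u v, T.dist (f₂ u) (f₂ v) = T.dist u v)
    (hne₁ : {x | f₁ x = x}.Nonempty) (hne₂ : {x | f₂ x = x}.Nonempty) (x : V) :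
    2 * setDist T {x | f₁ x = x} {x | f₂ x = x} ≤ T.dist x (f₁ (f₂ x)) := by
  obtain ⟨b₁, hb₁⟩ := hne₁
  obtain ⟨b₂, hb₂⟩ := hne₂
  obtain ⟨m₂, hm₂, hx⟩ := exists_fixed_isMidpoint hT hf₂ hb₂ x
  obtain ⟨m₁, hm₁, hy⟩ := exists_fixed_isMidpoint hT hf₁ hb₁ (f₂ x)
  calc 2 * setDist T {x | f₁ x = x} {x | f₂ x = x} ≤ 2 * T.dist m₂ m₁ := by
        rw [dist_comm]; exact Nat.mul_le_mul_left 2 (setDist_le hm₁ hm₂)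
    _ ≤ T.dist x (f₁ (f₂ x)) := two_mul_dist_le_of_isMidpoint hT hx.symm hy

theorem dist_comp_le_two_mul_dist (hT : T.Connected) {f₁ f₂ : V → V}
    (hf₁ : ∀ u v, T.dist (f₁ u) (f₁ v) = T.dist u v)
    (hf₂ : ∀ u v, T.dist (f₂ u) (f₂ v) = T.dist u v) {a b w : V} (ha : f₁ a = a)
    (hb : f₂ b = b) (hw : OnGeod T a w b) : T.dist w (f₁ (f₂ w)) ≤ 2 * T.dist a b := by
  have h₁ : T.dist a (f₁ (f₂ w)) = T.dist a (f₂ w) := by rw [← hf₁ a (f₂ w), ha]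
  have h₂ : T.dist b (f₂ w) = T.dist b w := by rw [← hf₂ b w, hb]
  have := hT.dist_triangle (u := w) (v := a) (w := f₁ (f₂ w))
  have := hT.dist_triangle (u := a) (v := b) (w := f₂ w)
  have := dist_comm (G := T) (u := w) (v := a)
  have := dist_comm (G := T) (u := b) (v := w)
  unfold OnGeod at hw
  omega

theorem translationLength_le {G : Type*} [Group G] [MulAction G V] (g : G) (x : V) :
    translationLength T g ≤ T.dist x (g • x) :=
  Nat.sInf_le ⟨x, rfl⟩

theorem le_translationLength {G : Type*} [Group G] [MulAction G V] [Nonempty V] {g : G} {n : ℕ}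
    (h : ∀ x, n ≤ T.dist x (g • x)) : n ≤ translationLength T g :=
  le_csInf (Set.range_nonempty _) (Set.forall_mem_range.2 h)

end

/-- If `h₁, h₂` are elliptic with disjoint (non-empty) fixed point sets, then `h₁h₂` is
hyperbolic (fixes no point), has translation length `2·d(Fix h₁, Fix h₂)`, and its axis
contains the bridge between the fixed point sets: every point on a geodesic realising the
distance between `Fix h₁` and `Fix h₂` is moved exactly the translation length. -/
theorem stmt_13 {V : Type*} (T : SimpleGraph V) (hT : T.IsTree)
    {G : Type*} [Group G] [MulAction G V]
    (hadj : ∀ (g : G) (u v : V), T.Adj u v → T.Adj (g • u) (g • v))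
    (h₁ h₂ : G)
    (hne₁ : {x : V | h₁ • x = x}.Nonempty) (hne₂ : {x : V | h₂ • x = x}.Nonempty)
    (hdisj : {x : V | h₁ • x = x} ∩ {x : V | h₂ • x = x} = ∅) :
    (∀ x : V, (h₁ * h₂) • x ≠ x) ∧
    translationLength T (h₁ * h₂) =
      2 * setDist T {x : V | h₁ • x = x} {x : V | h₂ • x = x} ∧
    (∀ w : V,
      (∃ a ∈ {x : V | h₁ • x = x}, ∃ b ∈ {x : V | h₂ • x = x},
        T.dist a b = setDist T {x : V | h₁ • x = x} {x : V | h₂ • x = x} ∧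
        OnGeod T a w b) →
      T.dist w ((h₁ * h₂) • w) = translationLength T (h₁ * h₂)) := by
  have hiso := dist_smul_eq_of_adj hT.connected hadj
  set Δ := setDist T {x : V | h₁ • x = x} {x : V | h₂ • x = x}
  have hlower (x : V) : 2 * Δ ≤ T.dist x ((h₁ * h₂) • x) := by
    rw [mul_smul]
    exact two_mul_setDist_le_dist_comp hT (hiso h₁) (hiso h₂) hne₁ hne₂ x
  have hupper (a : V) (ha : h₁ • a = a) (b : V) (hb : h₂ • b = b) (hab : T.dist a b = Δ)
      (w : V) (hw : OnGeod T a w b) : T.dist w ((h₁ * h₂) • w) ≤ 2 * Δ := by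
    rw [mul_smul, ← hab]
    exact dist_comp_le_two_mul_dist hT.connected (hiso h₁) (hiso h₂) ha hb hw
  obtain ⟨a, ha, b, hb, hab⟩ := exists_dist_eq_setDist (T := T) hne₁ hne₂
  have : Nonempty V := ⟨a⟩
  have hτ : translationLength T (h₁ * h₂) = 2 * Δ :=
    ((translationLength_le _ a).trans (hupper a ha b hb hab a (onGeod_left a b))).antisymm
      (le_translationLength hlower)
  refine ⟨fun x hx => ?_, hτ, ?_⟩
  · have hΔ := setDist_pos hT.connected hne₁ hne₂ (Set.disjoint_iff_inter_eq_empty.2 hdisj)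
    have := hlower x
    rw [hx, dist_self] at this
    omega
  · rintro w ⟨a', ha', b', hb', hab', hw⟩
    rw [hτ]
    exact (hupper a' ha' b' hb' hab' w hw).antisymm (hlower w)
end
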